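/- arXiv:2501.13659 — 3 statements merged into one kernel-verified Lean document; each statement's English description precedes it below -/
import Mathlib

section
/- Let b be a prime, let m ≥ 1 and s ≥ 1 be integers, and let C_1, …, C_s be m×m matrices over 𝔽_b with ρ_m(C_1,…,C_s) ≥ m − t for some integer t with 0 ≤ t ≤ m (as holds for the generating matrices of a digital (t,m,s)-net over 𝔽_b). Let 0 = w_1 ≤ w_2 ≤ ⋯ ≤ w_s be nonnegative integers and let C̃_1, …, C̃_s be the corresponding row reduced matrices. Then ρ_m(C̃_1,…,C̃_s) ≥ max{0, m − max{t, w_s}}. -/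
open scoped BigOperators

/-- Linear independence of the system consisting of the first `d j` rows of each matrix `C j`. -/
def rowsLinIndep (b m : ℕ) {ι : Type*} (C : ι → Matrix (Fin m) (Fin m) (ZMod b))
    (d : ι → ℕ) : Prop :=
  LinearIndependent (ZMod b)
    (fun p : {p : ι × Fin m // (p.2 : ℕ) < d p.1} => C p.1.1 p.1.2)

/-- The linear independence parameter `ρ_m(C_1,…,C_s)`: the largest `d ∈ {0,…,m}` such that
for every choice of nonnegative integers `d_j` summing to `d`, the collection of the first `d_j`
rows of the matrices is linearly independent. -/
noncomputable def rho (b m : ℕ) {ι : Type*} [Fintype ι]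
    (C : ι → Matrix (Fin m) (Fin m) (ZMod b)) : ℕ :=
  sSup {d | d ≤ m ∧ ∀ dv : ι → ℕ, (∑ j, dv j) = d → rowsLinIndep b m C dv}

/-- Row reduced matrix: the last `min m w` rows are set to zero. -/
def rowReduced {b m : ℕ} (C : Matrix (Fin m) (Fin m) (ZMod b)) (w : ℕ) :
    Matrix (Fin m) (Fin m) (ZMod b) :=
  Matrix.of fun i r => if (i : ℕ) < m - min m w then C i r else 0

/-- Column-row reduced matrix: the last `min m w` rows and columns are set to zero. -/
def colRowReduced {b m : ℕ} (C : Matrix (Fin m) (Fin m) (ZMod b)) (w : ℕ) :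
    Matrix (Fin m) (Fin m) (ZMod b) :=
  Matrix.of fun i r => if (i : ℕ) < m - min m w ∧ (r : ℕ) < m - min m w then C i r else 0

/-- Reduced matrix with possibly different row/column reduction indices. -/
def colRowReduced' {b m : ℕ} (C : Matrix (Fin m) (Fin m) (ZMod b)) (wr wc : ℕ) :
    Matrix (Fin m) (Fin m) (ZMod b) :=
  Matrix.of fun i r => if (i : ℕ) < m - min m wr ∧ (r : ℕ) < m - min m wc then C i r else 0

/-- Upper-left `m × m` submatrix of an infinite matrix. -/
def upperLeft {b : ℕ} (C : Matrix ℕ ℕ (ZMod b)) (m : ℕ) : Matrix (Fin m) (Fin m) (ZMod b) :=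
  Matrix.of fun i r => C (i : ℕ) (r : ℕ)

/-- The `k`-th coordinate value produced by the digital method with generating matrix `C`. -/
noncomputable def digitalPoint (b m : ℕ) (C : Matrix (Fin m) (Fin m) (ZMod b)) (k : ℕ) : ℝ :=
  ∑ i : Fin m,
    ((C.mulVec fun r : Fin m => ((k / b ^ (r : ℕ)) % b : ZMod b)) i).val
      / (b : ℝ) ^ ((i : ℕ) + 1)

open Classical in
/-- The `b^m` points `P 0, …, P (b^m - 1)` form a `(t,m,|ι|)`-net in base `b` (counted with
multiplicity): every elementary interval of volume `b^(t-m)` contains exactly `b^t` points. -/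
def isNet (b m t : ℕ) {ι : Type*} [Fintype ι] (P : ℕ → ι → ℝ) : Prop :=
  ∀ d a : ι → ℕ, (∀ j, a j < b ^ d j) → (∑ j, d j) = m - t →
    ((Finset.range (b ^ m)).filter fun k =>
        ∀ j, (a j : ℝ) / (b : ℝ) ^ d j ≤ P k j ∧ P k j < ((a j : ℝ) + 1) / (b : ℝ) ^ d j).card
      = b ^ t

/-! If the `d_j` sum to `m - max t w_s`, then `d_j ≤ m - w_j` for every `j`, so only rows that the
reduction leaves untouched are selected, and these are rows of the original `C_j`. Padding the
selection to total size `ρ_m(C) ≥ m - t` shows that they are linearly independent. -/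

section

variable {b m : ℕ} {ι : Type*}

theorem rowsLinIndep.mono {C : ι → Matrix (Fin m) (Fin m) (ZMod b)} {d d' : ι → ℕ}
    (hle : d ≤ d') (h : rowsLinIndep b m C d') : rowsLinIndep b m C d :=
  LinearIndependent.comp h
    (fun p : {p : ι × Fin m // (p.2 : ℕ) < d p.1} =>
      (⟨p.1, p.2.trans_le (hle p.1.1)⟩ : {p : ι × Fin m // (p.2 : ℕ) < d' p.1}))
    fun _ _ hpq => Subtype.ext (Subtype.mk_eq_mk.mp hpq)

theorem rowsLinIndep_zero (C : ι → Matrix (Fin m) (Fin m) (ZMod b)) :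
    rowsLinIndep b m C 0 :=
  haveI : IsEmpty {p : ι × Fin m // (p.2 : ℕ) < (0 : ι → ℕ) p.1} :=
    ⟨fun p => Nat.not_lt_zero _ p.2⟩
  linearIndependent_empty_type

variable [Fintype ι]

def rhoSet (b m : ℕ) (C : ι → Matrix (Fin m) (Fin m) (ZMod b)) : Set ℕ :=
  {n | n ≤ m ∧ ∀ d : ι → ℕ, ∑ j, d j = n → rowsLinIndep b m C d}

theorem bddAbove_rhoSet (C : ι → Matrix (Fin m) (Fin m) (ZMod b)) : BddAbove (rhoSet b m C) :=
  ⟨m, fun _ h => h.1⟩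

theorem rho_mem_rhoSet (C : ι → Matrix (Fin m) (Fin m) (ZMod b)) :
    rho b m C ∈ rhoSet b m C := by
  refine Nat.sSup_mem ⟨0, Nat.zero_le m, fun d hd => ?_⟩ (bddAbove_rhoSet C)
  obtain rfl : d = 0 := funext fun j => Finset.sum_eq_zero_iff.mp hd j (Finset.mem_univ j)
  exact rowsLinIndep_zero C

theorem le_rho_of_forall_rowsLinIndep {C : ι → Matrix (Fin m) (Fin m) (ZMod b)} {n : ℕ}
    (hn : n ≤ m) (h : ∀ d : ι → ℕ, ∑ j, d j = n → rowsLinIndep b m C d) : n ≤ rho b m C :=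
  le_csSup (bddAbove_rhoSet C) ⟨hn, h⟩

theorem rowsLinIndep_of_sum_le_rho {C : ι → Matrix (Fin m) (Fin m) (ZMod b)} {d : ι → ℕ}
    (hd : ∑ j, d j ≤ rho b m C) : rowsLinIndep b m C d := by
  classical
  rcases isEmpty_or_nonempty ι with hι | ⟨⟨i₀⟩⟩
  · exact Subsingleton.elim d 0 ▸ rowsLinIndep_zero C
  refine ((rho_mem_rhoSet C).2 (d + Pi.single i₀ (rho b m C - ∑ j, d j)) ?_).mono le_self_add
  rw [Pi.add_def, Finset.sum_add_distrib, Finset.sum_pi_single' i₀, if_pos (Finset.mem_univ i₀)]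
  omega

end

theorem rowReduced_row_of_lt {b m : ℕ} (C : Matrix (Fin m) (Fin m) (ZMod b)) {w : ℕ} {i : Fin m}
    (hi : (i : ℕ) < m - min m w) : rowReduced C w i = C i := by
  ext r
  simp [rowReduced, hi]

theorem rowsLinIndep_rowReduced_iff {b m : ℕ} {ι : Type*}
    {C : ι → Matrix (Fin m) (Fin m) (ZMod b)} {w d : ι → ℕ}
    (hd : ∀ j, d j ≤ m - min m (w j)) :
    rowsLinIndep b m (fun j => rowReduced (C j) (w j)) d ↔ rowsLinIndep b m C d := by
  unfold rowsLinIndep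
  congr! 2 with p
  exact rowReduced_row_of_lt _ (p.2.trans_le (hd _))

/-- lower bound on the linear independence parameter of row reduced matrices:
`ρ_m(C̃_1,…,C̃_s) ≥ max{0, m − max{t, w_s}}`. -/
theorem rho_rowReduced_ge (b m s t : ℕ) (hs : 1 ≤ s)
    (C : Fin s → Matrix (Fin m) (Fin m) (ZMod b))
    (hrho : m - t ≤ rho b m C)
    (w : Fin s → ℕ) (hwmono : Monotone w) :
    max 0 (m - max t (w ⟨s - 1, by omega⟩)) ≤
      rho b m (fun j => rowReduced (C j) (w j)) := by
  set W := w ⟨s - 1, by omega⟩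
  have hwW (j : Fin s) : w j ≤ W := hwmono (Fin.le_def.mpr (Nat.le_sub_one_of_lt j.isLt))
  rw [max_eq_right (Nat.zero_le _)]
  refine le_rho_of_forall_rowsLinIndep (Nat.sub_le _ _) fun d hd => ?_
  have hdj (j : Fin s) : d j ≤ m - min m (w j) :=
    calc d j ≤ ∑ i, d i := Finset.single_le_sum (fun i _ => Nat.zero_le _) (Finset.mem_univ j)
      _ = m - max t W := hd
      _ ≤ m - min m (w j) := by have := hwW j; omega
  rw [rowsLinIndep_rowReduced_iff hdj]
  exact rowsLinIndep_of_sum_le_rho <|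
    hd.trans_le ((Nat.sub_le_sub_left (le_max_left t W) m).trans hrho)
end

section
/- Let b be a prime, let m ≥ 1 and s ≥ 1 be integers, and let C_1, …, C_s be m×m matrices over 𝔽_b generating a digital (t,m,s)-net over 𝔽_b, where 0 ≤ t ≤ m. Let 0 = w_1 ≤ w_2 ≤ ⋯ ≤ w_s be nonnegative integers and let C̃_1, …, C̃_s be the corresponding row reduced matrices. Set t̃ := min{m, max{t, w_s}}. Then the b^m points generated by C̃_1, …, C̃_s via the digital method form a (t̃, m, s)-net in base b; that is, every elementary interval ∏_{j=1}^s [a_j b^{−d_j}, (a_j+1) b^{−d_j}) with nonnegative integers d_j and 0 ≤ a_j < b^{d_j} satisfying d_1+⋯+d_s = m − t̃ contains exactly b^{t̃} of the points (counted with multiplicity). -/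
open scoped BigOperators

/-!
Since `w_j ≤ w_s`, the first `m - t̃` rows of `C̃_j` are those of `C_j`. Whether a digital point
lies in an elementary interval `∏ [a_j b^{-d_j}, (a_j + 1) b^{-d_j})` only depends on its first
`d_j` digits in coordinate `j`, i.e. on the first `d_j` rows of the `j`-th matrix; as
`d_j ≤ m - t̃`, the reduced and the original point sets meet every elementary interval of volume
`b^{t̃ - m}` in the same points. The original point set, a `(t, m, s)`-net, is also a
`(t̃, m, s)`-net because each such interval is a disjoint union of `b^{t̃ - t}` elementary intervals
of volume `b^{t - m}`.
-/

open Finset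

def bAdicInterval (b d a : ℕ) : Set ℝ :=
  Set.Ico ((a : ℝ) / (b : ℝ) ^ d) (((a : ℝ) + 1) / (b : ℝ) ^ d)

section BAdicInterval

variable {b : ℕ} {x : ℝ}

lemma nonneg_of_mem_bAdicInterval {d a : ℕ} (h : x ∈ bAdicInterval b d a) : 0 ≤ x :=
  (div_nonneg (Nat.cast_nonneg a) (pow_nonneg (Nat.cast_nonneg b) d)).trans h.1

lemma mem_bAdicInterval_iff_floor (hb : 0 < b) (hx : 0 ≤ x) (d a : ℕ) :
    x ∈ bAdicInterval b d a ↔ ⌊x * (b : ℝ) ^ d⌋₊ = a := by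
  have hc : (0 : ℝ) < (b : ℝ) ^ d := by positivity
  rw [bAdicInterval, Set.mem_Ico, Nat.floor_eq_iff (by positivity), div_le_iff₀ hc,
    lt_div_iff₀ hc]

lemma eq_of_mem_bAdicInterval (hb : 0 < b) {d a₁ a₂ : ℕ} (h₁ : x ∈ bAdicInterval b d a₁)
    (h₂ : x ∈ bAdicInterval b d a₂) : a₁ = a₂ := by
  have hx := nonneg_of_mem_bAdicInterval h₁
  rw [mem_bAdicInterval_iff_floor hb hx] at h₁ h₂
  rw [← h₁, h₂]

lemma mem_bAdicInterval_iff_exists_refine (hb : 0 < b) (d u a : ℕ) :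
    x ∈ bAdicInterval b d a ↔ ∃ r < b ^ u, x ∈ bAdicInterval b (d + u) (a * b ^ u + r) := by
  by_cases hx : 0 ≤ x
  swap
  · exact iff_of_false (hx ∘ nonneg_of_mem_bAdicInterval)
      fun ⟨_, _, h⟩ => hx (nonneg_of_mem_bAdicInterval h)
  simp only [mem_bAdicInterval_iff_floor hb hx]
  have hq : 0 < b ^ u := pow_pos hb u
  have hcoarse : ⌊x * (b : ℝ) ^ d⌋₊ = ⌊x * (b : ℝ) ^ (d + u)⌋₊ / b ^ u := by
    rw [← Nat.floor_div_natCast, pow_add, Nat.cast_pow, ← mul_assoc,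
      mul_div_cancel_right₀ _ (by positivity)]
  rw [hcoarse]
  constructor
  · intro h
    refine ⟨⌊x * (b : ℝ) ^ (d + u)⌋₊ % b ^ u, Nat.mod_lt _ hq, ?_⟩
    rw [← h, Nat.div_add_mod']
  · rintro ⟨r, hr, h⟩
    rw [h, mul_comm, Nat.mul_add_div hq, Nat.div_eq_of_lt hr, add_zero]

end BAdicInterval

open Classical in
lemma isNet_iff {b m t : ℕ} {ι : Type*} [Fintype ι] {P : ℕ → ι → ℝ} :
    isNet b m t P ↔ ∀ d a : ι → ℕ, (∀ j, a j < b ^ d j) → ∑ j, d j = m - t →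
      #{k ∈ range (b ^ m) | ∀ j, P k j ∈ bAdicInterval b (d j) (a j)} = b ^ t := by
  simp only [isNet, bAdicInterval, Set.mem_Ico]

lemma isNet.mono {b m t t' : ℕ} {ι : Type*} [Fintype ι] [Nonempty ι] {P : ℕ → ι → ℝ}
    (hb : 0 < b) (hP : isNet b m t P) (htt' : t ≤ t') (ht' : t' ≤ m) : isNet b m t' P := by
  classical
  rw [isNet_iff] at hP ⊢
  intro d a ha hsum
  obtain ⟨j₀⟩ := ‹Nonempty ι›
  set u := t' - t
  -- Along the coordinate `j₀`, an elementary interval of volume `b ^ (t' - m)` is the disjoint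
  -- union of the `b ^ u` elementary intervals `(d', a' r)` of volume `b ^ (t - m)`.
  let d' : ι → ℕ := d + Pi.single j₀ u
  let a' : ℕ → ι → ℕ := fun r => Function.update a j₀ (a j₀ * b ^ u + r)
  have hd'₀ : d' j₀ = d j₀ + u := by simp [d']
  have hd' : ∀ j ≠ j₀, d' j = d j := fun j hj => by simp [d', hj]
  have ha'₀ : ∀ r, a' r j₀ = a j₀ * b ^ u + r := by simp [a']
  have ha' : ∀ r, ∀ j ≠ j₀, a' r j = a j := fun r j hj => by simp [a', hj]
  let cell : (ι → ℕ) → (ι → ℕ) → Finset ℕ := fun d a =>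
    {k ∈ range (b ^ m) | ∀ j, P k j ∈ bAdicInterval b (d j) (a j)}
  have hcell : ∀ r < b ^ u, #(cell d' (a' r)) = b ^ t := by
    intro r hr
    refine hP d' (a' r) (fun j => ?_) ?_
    · rcases eq_or_ne j j₀ with rfl | hj
      · rw [hd'₀, ha'₀, pow_add]
        calc a j * b ^ u + r < (a j + 1) * b ^ u := by rw [add_one_mul]; omega
          _ ≤ b ^ d j * b ^ u := Nat.mul_le_mul_right _ (ha j)
      · simpa only [hd' j hj, ha' r j hj] using ha j
    · simp only [d', Pi.add_apply, sum_add_distrib, sum_pi_single', if_pos (mem_univ j₀), hsum]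
      omega
  have hsplit : cell d a = (range (b ^ u)).biUnion fun r => cell d' (a' r) := by
    ext k
    simp only [cell, mem_filter, mem_biUnion, mem_range]
    constructor
    · rintro ⟨hk, h⟩
      obtain ⟨r, hr, hr₀⟩ := (mem_bAdicInterval_iff_exists_refine hb (d j₀) u (a j₀)).mp (h j₀)
      refine ⟨r, hr, hk, fun j => ?_⟩
      rcases eq_or_ne j j₀ with rfl | hj
      · rwa [hd'₀, ha'₀]
      · simpa only [hd' j hj, ha' r j hj] using h j
    · rintro ⟨r, hr, hk, h⟩
      refine ⟨hk, fun j => ?_⟩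
      rcases eq_or_ne j j₀ with rfl | hj
      · have h₀ := h j
        rw [hd'₀, ha'₀] at h₀
        exact (mem_bAdicInterval_iff_exists_refine hb _ u _).mpr ⟨r, hr, h₀⟩
      · simpa only [hd' j hj, ha' r j hj] using h j
  have hdisj : Set.PairwiseDisjoint (range (b ^ u) : Set ℕ) fun r => cell d' (a' r) := by
    intro r _ r' _ hne
    refine disjoint_left.mpr fun k hk hk' => hne ?_
    have h := (mem_filter.mp hk).2 j₀
    have h' := (mem_filter.mp hk').2 j₀
    rw [hd'₀, ha'₀] at h h'
    exact Nat.add_left_cancel (eq_of_mem_bAdicInterval hb h h')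
  calc #(cell d a)
    _ = b ^ u * b ^ t := by
      rw [hsplit, card_biUnion hdisj, sum_congr rfl fun r hr => hcell r (mem_range.mp hr),
        sum_const, card_range, smul_eq_mul]
    _ = b ^ t' := by rw [← pow_add]; congr 1; omega

def digitsValue (b : ℕ) (y : ℕ → ℕ) : ℕ → ℕ
  | 0 => 0
  | n + 1 => digitsValue b y n * b + y n

section DigitsValue

variable {b : ℕ} {y : ℕ → ℕ}

lemma digitsValue_congr {y' : ℕ → ℕ} {n : ℕ} (h : ∀ i < n, y i = y' i) :
    digitsValue b y n = digitsValue b y' n := by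
  induction n with
  | zero => rfl
  | succ n ih => rw [digitsValue, digitsValue, ih fun i hi => h i (by omega), h n (by omega)]

lemma digitsValue_add_div (hy : ∀ i, y i < b) (n e : ℕ) :
    digitsValue b y (n + e) / b ^ e = digitsValue b y n := by
  induction e with
  | zero => simp
  | succ e ih =>
    have hb : 0 < b := (hy 0).trans_le' (Nat.zero_le _)
    rw [← add_assoc, digitsValue, pow_succ', ← Nat.div_div_eq_div_mul,
      Nat.add_div_of_dvd_right (dvd_mul_left b _), Nat.mul_div_cancel _ hb,
      Nat.div_eq_of_lt (hy _), add_zero, ih]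

lemma sum_div_pow_eq_digitsValue (hb : b ≠ 0) (n : ℕ) :
    ∑ i ∈ range n, (y i : ℝ) / (b : ℝ) ^ (i + 1) = digitsValue b y n / (b : ℝ) ^ n := by
  induction n with
  | zero => simp [digitsValue]
  | succ n ih =>
    rw [sum_range_succ, ih, digitsValue]
    push_cast
    field_simp
    ring

lemma floor_digitsValue_div_pow_mul_pow (hy : ∀ i, y i < b) {d n : ℕ} (hd : d ≤ n) :
    ⌊(digitsValue b y n : ℝ) / (b : ℝ) ^ n * (b : ℝ) ^ d⌋₊ = digitsValue b y d := by
  obtain ⟨e, rfl⟩ := Nat.exists_eq_add_of_le hd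
  have hb : (0 : ℝ) < b := Nat.cast_pos.mpr ((hy 0).trans_le' (Nat.zero_le _))
  rw [pow_add, mul_comm ((b : ℝ) ^ d), ← div_div, div_mul_cancel₀ _ (by positivity),
    ← Nat.cast_pow, Nat.floor_div_eq_div, digitsValue_add_div hy]

end DigitsValue

def pointDigit (b m : ℕ) (C : Matrix (Fin m) (Fin m) (ZMod b)) (k i : ℕ) : ℕ :=
  if h : i < m then (C.mulVec fun r : Fin m => ((k / b ^ (r : ℕ)) % b : ZMod b)) ⟨i, h⟩ |>.val
  else 0

section DigitalPoint

variable {b m : ℕ} {C : Matrix (Fin m) (Fin m) (ZMod b)} {k : ℕ}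

lemma pointDigit_lt [NeZero b] (i : ℕ) : pointDigit b m C k i < b := by
  unfold pointDigit
  split
  · exact ZMod.val_lt _
  · exact Nat.pos_of_neZero b

lemma digitalPoint_eq_digitsValue (hb : b ≠ 0) :
    digitalPoint b m C k = digitsValue b (pointDigit b m C k) m / (b : ℝ) ^ m := by
  rw [digitalPoint, ← sum_div_pow_eq_digitsValue hb,
    ← Fin.sum_univ_eq_sum_range (fun i => (pointDigit b m C k i : ℝ) / (b : ℝ) ^ (i + 1))]
  simp [pointDigit]

lemma digitalPoint_mem_bAdicInterval_iff (hb : 1 < b) {d : ℕ} (hd : d ≤ m) (a : ℕ) :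
    digitalPoint b m C k ∈ bAdicInterval b d a ↔ digitsValue b (pointDigit b m C k) d = a := by
  have : NeZero b := ⟨by omega⟩
  rw [digitalPoint_eq_digitsValue (by omega), mem_bAdicInterval_iff_floor (by omega)
    (by positivity), floor_digitsValue_div_pow_mul_pow pointDigit_lt hd]

lemma pointDigit_rowReduced {w i : ℕ} (hi : i < m - min m w) :
    pointDigit b m (rowReduced C w) k i = pointDigit b m C k i := by
  have him : i < m := by omega
  simp [pointDigit, him, Matrix.mulVec, dotProduct, rowReduced, hi]

lemma digitalPoint_rowReduced_mem_bAdicInterval_iff (hb : 1 < b) {w d : ℕ}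
    (hd : d ≤ m - min m w) (a : ℕ) :
    digitalPoint b m (rowReduced C w) k ∈ bAdicInterval b d a ↔
      digitalPoint b m C k ∈ bAdicInterval b d a := by
  rw [digitalPoint_mem_bAdicInterval_iff hb (by omega), digitalPoint_mem_bAdicInterval_iff hb
    (by omega), digitsValue_congr fun i hi => pointDigit_rowReduced (by omega)]

end DigitalPoint

/-- if `C_1,…,C_s` generate a digital `(t,m,s)`-net over `𝔽_b`, then the row reduced
matrices generate a `(t̃,m,s)`-net with `t̃ = min{m, max{t, w_s}}`. -/
theorem rowReduced_isNet (b m s t : ℕ) (hb : Nat.Prime b) (hs : 1 ≤ s)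
    (ht : t ≤ m) (C : Fin s → Matrix (Fin m) (Fin m) (ZMod b))
    (hnet : isNet b m t (fun k (j : Fin s) => digitalPoint b m (C j) k))
    (w : Fin s → ℕ) (hwmono : Monotone w) :
    isNet b m (min m (max t (w ⟨s - 1, by omega⟩)))
      (fun k (j : Fin s) => digitalPoint b m (rowReduced (C j) (w j)) k) := by
  have : Nonempty (Fin s) := ⟨⟨0, hs⟩⟩
  have hnet' := hnet.mono (t' := min m (max t (w ⟨s - 1, by omega⟩))) hb.pos
    (le_min ht (le_max_left _ _)) (min_le_left _ _)
  rw [isNet_iff] at hnet' ⊢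
  intro d a ha hsum
  have hd : ∀ j, d j ≤ m - min m (w j) := by
    intro j
    have hw : w j ≤ w ⟨s - 1, by omega⟩ := hwmono (Fin.le_def.mpr (by simp; omega))
    have := single_le_sum (fun j _ => Nat.zero_le (d j)) (mem_univ j)
    omega
  rw [← hnet' d a ha hsum]
  congr 1
  ext k
  simp only [mem_filter]
  exact and_congr_right fun _ => forall_congr' fun j =>
    digitalPoint_rowReduced_mem_bAdicInterval_iff hb.one_lt (hd j) (a j)
end

section
/- Let b be a prime, let m ≥ 1 and s ≥ 1 be integers, and let C_1, …, C_s be m×m matrices over 𝔽_b. Let u ⊆ {1,…,s} be nonempty with maximal element ū := max(u), and suppose the projection of the digital point set generated by C_1,…,C_s onto the coordinates in u is a digital (t_u, m, |u|)-net over 𝔽_b, where 0 ≤ t_u ≤ m. Let 0 = w_1 ≤ w_2 ≤ ⋯ ≤ w_s be nonnegative integers, let C̃_1, …, C̃_s be the corresponding row reduced matrices, and set t̃_u := min{m, max{w_ū, t_u}}. Then the b^m points in [0,1)^{|u|} generated by the matrices (C̃_j)_{j∈u} via the digital method form a (t̃_u, m, |u|)-net in base b. -/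
open scoped BigOperators

/-
A point of a digital net lies in the elementary box `∏ [a_j b^{-d_j}, (a_j+1) b^{-d_j})` iff, for
each `j`, the first `d_j` digits of its `j`-th coordinate are those of `a_j`, i.e. iff its digit
vector solves the linear system formed by the first `d_j` rows of the `C_j`. So being a
`(t,m,s)`-net means that every such system with `m - t` rows has `b^t` solutions, and by
rank–nullity (with `a = 0`) this forces those rows to be linearly independent; conversely
independence of the rows gives `b^t` solutions for every right-hand side. Row reduction of `C_j`
only removes rows beyond position `m - w_j ≥ m - t̃_u`, so the systems relevant for `t̃_u` use
unmodified rows, at most `m - t_u` of them, which are independent because of the `t_u`-net.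
-/

open Finset Matrix

section Digits

variable {b : ℕ}

lemma sum_mul_pow_sub_eq_finFunctionFinEquiv {n : ℕ} (c : Fin n → ℕ) (hc : ∀ i, c i < b) :
    ∑ i, c i * b ^ (n - 1 - i) =
      finFunctionFinEquiv (fun q => (⟨c (Fin.rev q), hc _⟩ : Fin b)) := by
  rw [finFunctionFinEquiv_apply]
  refine Fintype.sum_equiv Fin.revPerm _ _ fun i => ?_
  simp only [Fin.revPerm_apply, Fin.rev_rev, Fin.val_rev]
  congr 2
  omega

lemma sum_mul_pow_sub_lt {n : ℕ} (c : Fin n → ℕ) (hc : ∀ i, c i < b) :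
    ∑ i, c i * b ^ (n - 1 - i) < b ^ n := by
  rw [sum_mul_pow_sub_eq_finFunctionFinEquiv c hc]
  exact Fin.isLt _

lemma sum_mul_pow_sub_div_pow_mod {n : ℕ} (c : Fin n → ℕ) (hc : ∀ i, c i < b) (i : Fin n) :
    (∑ j, c j * b ^ (n - 1 - j)) / b ^ (n - 1 - i) % b = c i := by
  have h := finFunctionFinEquiv_symm_apply_val
    (finFunctionFinEquiv (fun q => (⟨c (Fin.rev q), hc _⟩ : Fin b))) (Fin.rev i)
  rw [Equiv.symm_apply_apply, ← sum_mul_pow_sub_eq_finFunctionFinEquiv c hc, Fin.rev_rev,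
    Fin.val_rev] at h
  rw [show n - (i + 1) = n - 1 - i by omega] at h
  exact h.symm

lemma eq_of_forall_div_pow_sub_mod_eq {n x y : ℕ} (hx : x < b ^ n) (hy : y < b ^ n)
    (h : ∀ i < n, x / b ^ (n - 1 - i) % b = y / b ^ (n - 1 - i) % b) : x = y := by
  have hxy : finFunctionFinEquiv.symm (⟨x, hx⟩ : Fin (b ^ n)) =
      finFunctionFinEquiv.symm ⟨y, hy⟩ := by
    funext q
    have hq := h (Fin.rev q) (Fin.rev q).isLt
    rw [Fin.val_rev, show n - 1 - (n - (q + 1)) = q by omega] at hq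
    exact Fin.ext (by simpa only [finFunctionFinEquiv_symm_apply_val] using hq)
  simpa using finFunctionFinEquiv.symm.injective hxy

lemma sum_mul_pow_sub_div_eq_iff {m d a : ℕ} (hd : d ≤ m) (ha : a < b ^ d) (c : Fin m → ℕ)
    (hc : ∀ i, c i < b) :
    (∑ j, c j * b ^ (m - 1 - j)) / b ^ (m - d) = a ↔
      ∀ i : Fin m, (i : ℕ) < d → c i = a / b ^ (d - 1 - i) % b := by
  set N := ∑ j, c j * b ^ (m - 1 - j)
  have hdigit : ∀ i : Fin m, (i : ℕ) < d → N / b ^ (m - d) / b ^ (d - 1 - i) % b = c i := by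
    intro i hi
    rw [Nat.div_div_eq_div_mul, ← pow_add, show m - d + (d - 1 - i) = m - 1 - i by omega]
    exact sum_mul_pow_sub_div_pow_mod c hc i
  constructor
  · rintro h i hi
    rw [← hdigit i hi, h]
  · intro h
    have hN : N / b ^ (m - d) < b ^ d := by
      refine Nat.div_lt_of_lt_mul ?_
      rw [← pow_add, Nat.sub_add_cancel hd]
      exact sum_mul_pow_sub_lt c hc
    refine eq_of_forall_div_pow_sub_mod_eq hN ha fun i hi => ?_
    rw [hdigit ⟨i, by omega⟩ hi, h ⟨i, by omega⟩ hi]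

lemma sum_div_pow_succ_eq {m : ℕ} (hb : b ≠ 0) (c : Fin m → ℕ) :
    ∑ i : Fin m, (c i : ℝ) / (b : ℝ) ^ ((i : ℕ) + 1) =
      ((∑ i, c i * b ^ (m - 1 - i) : ℕ) : ℝ) / (b : ℝ) ^ m := by
  push_cast
  rw [Finset.sum_div]
  refine Finset.sum_congr rfl fun i _ => ?_
  have hpow : (b : ℝ) ^ m = (b : ℝ) ^ (m - 1 - i) * (b : ℝ) ^ ((i : ℕ) + 1) := by
    rw [← pow_add]
    congr 1
    omega
  have : (b : ℝ) ≠ 0 := by exact_mod_cast hb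
  rw [hpow]
  field_simp

lemma div_pow_le_and_lt_div_pow_iff (hb : 0 < b) {x : ℝ} (hx : 0 ≤ x) (a d : ℕ) :
    (a : ℝ) / (b : ℝ) ^ d ≤ x ∧ x < ((a : ℝ) + 1) / (b : ℝ) ^ d ↔
      ⌊(b : ℝ) ^ d * x⌋₊ = a := by
  have hbd : (0 : ℝ) < (b : ℝ) ^ d := by positivity
  rw [Nat.floor_eq_iff (by positivity), div_le_iff₀ hbd, lt_div_iff₀ hbd, mul_comm x]

lemma val_eq_iff_eq_natCast [NeZero b] {y : ZMod b} {n : ℕ} (hn : n < b) :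
    y.val = n ↔ y = n := by
  constructor
  · rintro rfl
    exact (ZMod.natCast_zmod_val y).symm
  · rintro rfl
    exact ZMod.val_cast_of_lt hn

lemma sum_val_div_pow_mem_iff [NeZero b] {m d a : ℕ} (hd : d ≤ m) (ha : a < b ^ d)
    (y : Fin m → ZMod b) :
    (a : ℝ) / (b : ℝ) ^ d ≤ ∑ i, ((y i).val : ℝ) / (b : ℝ) ^ ((i : ℕ) + 1) ∧
        ∑ i, ((y i).val : ℝ) / (b : ℝ) ^ ((i : ℕ) + 1) < ((a : ℝ) + 1) / (b : ℝ) ^ d ↔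
      ∀ i : Fin m, (i : ℕ) < d → y i = ((a / b ^ (d - 1 - i) % b : ℕ) : ZMod b) := by
  have hb : 0 < b := Nat.pos_of_neZero b
  -- With `N` the numeral with digits `y`, the box condition becomes `N / b^(m-d) = a` in `ℕ`.
  rw [sum_div_pow_succ_eq hb.ne', div_pow_le_and_lt_div_pow_iff hb (by positivity)]
  have hscale : ∀ N : ℕ,
      (b : ℝ) ^ d * ((N : ℝ) / (b : ℝ) ^ m) = (N : ℝ) / ((b ^ (m - d) : ℕ) : ℝ) := by
    intro N
    have hpow : (b : ℝ) ^ m = (b : ℝ) ^ d * (b : ℝ) ^ (m - d) := by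
      rw [← pow_add, Nat.add_sub_cancel' hd]
    have : (b : ℝ) ≠ 0 := by positivity
    push_cast
    rw [hpow]
    field_simp
  rw [hscale, Nat.floor_div_eq_div, sum_mul_pow_sub_div_eq_iff hd ha _ fun i => ZMod.val_lt _]
  exact forall_congr' fun i => imp_congr_right fun _ => val_eq_iff_eq_natCast (Nat.mod_lt _ hb)

def digitVec (b m k : ℕ) : Fin m → ZMod b := fun r => ((k / b ^ (r : ℕ) % b : ℕ) : ZMod b)

lemma card_filter_range_digitVec [NeZero b] (m : ℕ) (P : (Fin m → ZMod b) → Prop)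
    [DecidablePred P] :
    ((range (b ^ m)).filter fun k => P (digitVec b m k)).card = Nat.card {x // P x} := by
  rw [Nat.card_eq_fintype_card, Fintype.card_subtype]
  let toNat : (Fin m → ZMod b) → ℕ := fun x =>
    finFunctionFinEquiv fun r => (⟨(x r).val, ZMod.val_lt _⟩ : Fin b)
  have digitVec_toNat : ∀ x, digitVec b m (toNat x) = x := by
    intro x
    funext r
    have h := finFunctionFinEquiv_symm_apply_val
      (finFunctionFinEquiv fun r => (⟨(x r).val, ZMod.val_lt _⟩ : Fin b)) r
    rw [Equiv.symm_apply_apply] at h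
    simp only [digitVec, toNat, ← h, ZMod.natCast_zmod_val]
  have toNat_digitVec : ∀ k < b ^ m, toNat (digitVec b m k) = k := by
    intro k hk
    have h : (fun r => (⟨(digitVec b m k r).val, ZMod.val_lt _⟩ : Fin b)) =
        finFunctionFinEquiv.symm ⟨k, hk⟩ := by
      funext r
      ext
      simp [digitVec, finFunctionFinEquiv_symm_apply_val]
    simp only [toNat, h, Equiv.apply_symm_apply]
  refine card_nbij' (digitVec b m) toNat ?_ ?_ ?_ ?_
  · intro k hk
    rw [mem_coe, mem_filter] at hk ⊢
    exact ⟨mem_univ _, hk.2⟩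
  · intro x hx
    rw [mem_coe, mem_filter] at hx ⊢
    rw [mem_range, digitVec_toNat]
    exact ⟨Fin.isLt _, hx.2⟩
  · intro k hk
    rw [mem_coe, mem_filter, mem_range] at hk
    exact toNat_digitVec k hk.1
  · intro x _
    exact digitVec_toNat x

end Digits

namespace Matrix

variable {K I n : Type*} [Field K] [Fintype n]

lemma natCard_mulVec_eq_zero (A : Matrix I n K) :
    Nat.card {x // A *ᵥ x = 0} = Nat.card K ^ (Fintype.card n - A.rank) := by
  have hker : Nat.card {x // A *ᵥ x = 0} = Nat.card (LinearMap.ker A.mulVecLin) := rfl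
  have hdim := LinearMap.finrank_range_add_finrank_ker A.mulVecLin
  rw [Module.finrank_fintype_fun_eq_card] at hdim
  rw [hker, Module.natCard_eq_pow_finrank (K := K), ← hdim]
  simp [rank]

lemma natCard_mulVec_eq_of_linearIndependent_rows [Fintype K] [Fintype I] {A : Matrix I n K}
    (hA : LinearIndependent K A.row) (c : I → K) :
    Nat.card {x // A *ᵥ x = c} = Nat.card K ^ (Fintype.card n - Fintype.card I) := by
  classical
  have hsurj : Function.Surjective A.mulVecLin := by
    rw [← LinearMap.range_eq_top]
    apply Submodule.eq_top_of_finrank_eq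
    rw [Module.finrank_fintype_fun_eq_card, ← hA.rank_matrix, rank]
  have hfiber := AddMonoidHom.card_fiber_eq_of_mem_range A.mulVecLin (hsurj c) (hsurj 0)
  rw [← hA.rank_matrix, ← natCard_mulVec_eq_zero, Nat.card_eq_fintype_card,
    Nat.card_eq_fintype_card, Fintype.card_subtype, Fintype.card_subtype]
  convert hfiber using 3 <;> rfl

lemma linearIndependent_rows_of_natCard_mulVec_eq_zero [Finite K] [Fintype I] {A : Matrix I n K}
    (hI : Fintype.card I ≤ Fintype.card n)
    (h : Nat.card {x // A *ᵥ x = 0} = Nat.card K ^ (Fintype.card n - Fintype.card I)) :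
    LinearIndependent K A.row := by
  rw [natCard_mulVec_eq_zero] at h
  have hrank := Nat.pow_right_injective Finite.one_lt_card h
  have := A.rank_le_card_width
  rw [linearIndependent_iff_card_eq_finrank_span, Set.finrank, ← rank_eq_finrank_span_row]
  omega

end Matrix

section SelectedRows

variable {K ι : Type*} {m : ℕ}

def selectedRows (C : ι → Matrix (Fin m) (Fin m) K) (d : ι → ℕ) :
    Matrix {p : ι × Fin m // (p.2 : ℕ) < d p.1} (Fin m) K :=
  Matrix.of fun p => C p.1.1 p.1.2

/-- Entry `(j, i)` is the `i`-th base-`b` digit of `a j` written with `d j` digits, most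
significant first. -/
def leadingDigits (b : ℕ) (d a : ι → ℕ) :
    {p : ι × Fin m // (p.2 : ℕ) < d p.1} → ZMod b :=
  fun p => ((a p.1.1 / b ^ (d p.1.1 - 1 - p.1.2) % b : ℕ) : ZMod b)

@[simp]
lemma leadingDigits_zero (b : ℕ) (d : ι → ℕ) :
    (leadingDigits b d 0 : {p : ι × Fin m // (p.2 : ℕ) < d p.1} → ZMod b) = 0 := by
  ext p
  simp [leadingDigits]

lemma card_selectedRows_index [Fintype ι] {d : ι → ℕ} (hd : ∀ j, d j ≤ m) :
    Fintype.card {p : ι × Fin m // (p.2 : ℕ) < d p.1} = ∑ j, d j := by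
  classical
  rw [Fintype.card_subtype, card_filter, Fintype.sum_prod_type]
  refine sum_congr rfl fun j _ => ?_
  rw [← card_filter]
  convert Fin.card_filter_val_lt.trans (min_eq_right (hd j))

lemma rowsLinIndep_iff {b : ℕ} {C : ι → Matrix (Fin m) (Fin m) (ZMod b)} {d : ι → ℕ} :
    rowsLinIndep b m C d ↔ LinearIndependent (ZMod b) (selectedRows C d).row :=
  Iff.rfl

lemma rowsLinIndep_mono {b : ℕ} {C : ι → Matrix (Fin m) (Fin m) (ZMod b)} {d d' : ι → ℕ}
    (h : d ≤ d') (hC : rowsLinIndep b m C d') : rowsLinIndep b m C d := by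
  have hinj : Function.Injective fun p : {p : ι × Fin m // (p.2 : ℕ) < d p.1} =>
      (⟨p.1, p.2.trans_le (h p.1.1)⟩ : {p : ι × Fin m // (p.2 : ℕ) < d' p.1}) :=
    fun _ _ hpq => Subtype.ext (by simpa using hpq)
  exact hC.comp _ hinj

end SelectedRows

section DigitalNet

variable {b m : ℕ} {ι : Type*}

lemma digitalPoint_mem_box_iff [NeZero b] (M : ι → Matrix (Fin m) (Fin m) (ZMod b))
    {d a : ι → ℕ} (hd : ∀ j, d j ≤ m) (ha : ∀ j, a j < b ^ d j) (k : ℕ) :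
    (∀ j, (a j : ℝ) / (b : ℝ) ^ d j ≤ digitalPoint b m (M j) k ∧
        digitalPoint b m (M j) k < ((a j : ℝ) + 1) / (b : ℝ) ^ d j) ↔
      selectedRows M d *ᵥ digitVec b m k = leadingDigits b d a := by
  rw [funext_iff, Subtype.forall, Prod.forall]
  exact forall_congr' fun j => sum_val_div_pow_mem_iff (hd j) (ha j) _

theorem isNet_digitalPoint_iff [NeZero b] [Fintype ι] (M : ι → Matrix (Fin m) (Fin m) (ZMod b))
    (t : ℕ) :
    isNet b m t (fun k j => digitalPoint b m (M j) k) ↔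
      ∀ d a : ι → ℕ, (∀ j, a j < b ^ d j) → ∑ j, d j = m - t →
        Nat.card {x // selectedRows M d *ᵥ x = leadingDigits b d a} = b ^ t := by
  refine forall₂_congr fun d a => forall₂_congr fun ha hsum => ?_
  have hd : ∀ j, d j ≤ m := fun j =>
    (single_le_sum_of_canonicallyOrdered (mem_univ j)).trans (hsum ▸ Nat.sub_le m t)
  rw [filter_congr fun k _ => digitalPoint_mem_box_iff M hd ha k,
    card_filter_range_digitVec m fun x => selectedRows M d *ᵥ x = leadingDigits b d a]

lemma selectedRows_rowReduced (C : ι → Matrix (Fin m) (Fin m) (ZMod b)) {w d : ι → ℕ}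
    (hd : ∀ j, d j ≤ m - min m (w j)) :
    selectedRows (fun j => rowReduced (C j) (w j)) d = selectedRows C d := by
  ext p r
  exact if_pos (p.2.trans_le (hd p.1.1))

theorem rowsLinIndep_of_isNet_of_sum_eq [Fintype ι] (hb : b.Prime)
    {M : ι → Matrix (Fin m) (Fin m) (ZMod b)} {t : ℕ} (ht : t ≤ m)
    (hnet : isNet b m t fun k j => digitalPoint b m (M j) k) {d : ι → ℕ}
    (hsum : ∑ j, d j = m - t) : rowsLinIndep b m M d := by
  have : Fact b.Prime := ⟨hb⟩
  have hd : ∀ j, d j ≤ m := fun j =>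
    (single_le_sum_of_canonicallyOrdered (mem_univ j)).trans (hsum ▸ Nat.sub_le m t)
  rw [isNet_digitalPoint_iff] at hnet
  refine rowsLinIndep_iff.mpr (linearIndependent_rows_of_natCard_mulVec_eq_zero ?_ ?_)
  · rw [card_selectedRows_index hd, hsum, Fintype.card_fin]
    exact Nat.sub_le m t
  · rw [card_selectedRows_index hd, hsum, Fintype.card_fin, Nat.card_zmod, Nat.sub_sub_self ht]
    simpa using hnet d 0 (fun j => pow_pos hb.pos _) hsum

theorem rowsLinIndep_of_isNet [Fintype ι] [Nonempty ι] (hb : b.Prime)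
    {M : ι → Matrix (Fin m) (Fin m) (ZMod b)} {t : ℕ} (ht : t ≤ m)
    (hnet : isNet b m t fun k j => digitalPoint b m (M j) k) {d : ι → ℕ}
    (hsum : ∑ j, d j ≤ m - t) : rowsLinIndep b m M d := by
  classical
  obtain ⟨j₀⟩ := ‹Nonempty ι›
  refine rowsLinIndep_mono (d' := d + Pi.single j₀ (m - t - ∑ j, d j))
    (fun j => Nat.le_add_right _ _) (rowsLinIndep_of_isNet_of_sum_eq hb ht hnet ?_)
  simp only [Pi.add_apply, sum_add_distrib, sum_pi_single', mem_univ, if_true]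
  omega

end DigitalNet

theorem rowReduced_proj_isNet_general (b m s : ℕ) (hb : Nat.Prime b)
    (C : Fin s → Matrix (Fin m) (Fin m) (ZMod b))
    (u : Finset (Fin s)) (hu : u.Nonempty) (tu : ℕ) (htu : tu ≤ m)
    (hnet : isNet b m tu (fun k (j : ↥u) => digitalPoint b m (C j) k))
    (w : Fin s → ℕ) (hwmono : Monotone w) :
    isNet b m (min m (max (w (u.max' hu)) tu))
      (fun k (j : ↥u) => digitalPoint b m (rowReduced (C j) (w j)) k) := by
  have : Fact b.Prime := ⟨hb⟩
  have : Nonempty u := hu.to_subtype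
  set t := min m (max (w (u.max' hu)) tu)
  rw [isNet_digitalPoint_iff]
  intro d a ha hsum
  have hd : ∀ j, d j ≤ m - t := fun j =>
    hsum ▸ single_le_sum_of_canonicallyOrdered (mem_univ j)
  have hdw : ∀ j : u, d j ≤ m - min m (w j) := fun j =>
    (hd j).trans (by have := hwmono (u.le_max' _ j.2); omega)
  have hindep := rowsLinIndep_of_isNet hb htu hnet (d := d) (by omega)
  rw [selectedRows_rowReduced (fun j : u => C j) hdw,
    natCard_mulVec_eq_of_linearIndependent_rows (rowsLinIndep_iff.mp hindep),
    card_selectedRows_index fun j => (hd j).trans (Nat.sub_le m t), hsum, Fintype.card_fin,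
    Nat.card_zmod, Nat.sub_sub_self (min_le_left _ _)]

/-- if the projection of the digital net generated by `C_1,…,C_s` onto the
coordinates in `u` is a digital `(t_u,m,|u|)`-net, then the points generated by the row reduced
matrices `(C̃_j)_{j∈u}` form a `(t̃_u,m,|u|)`-net with `t̃_u = min{m, max{w_ū, t_u}}`. -/
theorem rowReduced_proj_isNet (b m s : ℕ) (hb : Nat.Prime b) (hm : 1 ≤ m) (hs : 1 ≤ s)
    (C : Fin s → Matrix (Fin m) (Fin m) (ZMod b))
    (u : Finset (Fin s)) (hu : u.Nonempty) (tu : ℕ) (htu : tu ≤ m)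
    (hnet : isNet b m tu (fun k (j : ↥u) => digitalPoint b m (C j) k))
    (w : Fin s → ℕ) (hw1 : w ⟨0, hs⟩ = 0) (hwmono : Monotone w) :
    isNet b m (min m (max (w (u.max' hu)) tu))
      (fun k (j : ↥u) => digitalPoint b m (rowReduced (C j) (w j)) k) :=
  rowReduced_proj_isNet_general b m s hb C u hu tu htu hnet w hwmono
end
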